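/- arXiv:2605.03240 — 2 statements merged into one kernel-verified Lean document; each statement's English description precedes it below -/
import Mathlib

section
/- Sign of the θ-derivative of the tilting equation beyond the truth: if θ ≥ θ* and α ∈ [α*, 1), then G_θ(θ, α) ≤ 0. -/
open MeasureTheory

/-- The standard Gaussian density. -/
noncomputable def stdGauss (y : ℝ) : ℝ :=
  (Real.sqrt (2 * Real.pi))⁻¹ * Real.exp (-y ^ 2 / 2)

/-- Density of the two-component mixture `α*·N(θ*,1) + (1-α*)·N(-θ*,1)`. -/
noncomputable def mixDen (θs αs y : ℝ) : ℝ :=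
  αs * stdGauss (y - θs) + (1 - αs) * stdGauss (y + θs)

/-- The EM/Sinkhorn-EM map `F(θ, α)`. -/
noncomputable def Fmap (θs αs θ α : ℝ) : ℝ :=
  ∫ y, y * (α * Real.exp (θ * y) - (1 - α) * Real.exp (-(θ * y))) /
      (α * Real.exp (θ * y) + (1 - α) * Real.exp (-(θ * y))) * mixDen θs αs y

/-- The tilting equation map `G(θ, α)`. -/
noncomputable def Gmap (θs αs θ α : ℝ) : ℝ :=
  ∫ y, α * Real.exp (θ * y) /
      (α * Real.exp (θ * y) + (1 - α) * Real.exp (-(θ * y))) * mixDen θs αs y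

/-- The (normalized) `θ`-derivative of the tilting equation, `G_θ(θ, α)`. -/
noncomputable def Gtheta (θs αs θ α : ℝ) : ℝ :=
  ∫ y, y / (α * Real.exp (θ * y) + (1 - α) * Real.exp (-(θ * y))) ^ 2 * mixDen θs αs y

/-!
With `tilt α x = α eˣ + (1 - α) e⁻ˣ`, the integrand of `Gtheta` is
`y φ(y) e^{-θ*²/2} tilt α* (θ* y) / tilt α (θ y)²`, and `tilt α (-x) = tilt (1 - α) x`.
Pairing `y` with `-y`, it suffices that for `0 ≤ u = θ* y ≤ v = θ y`
`tilt α* u · tilt (1 - α) v² ≤ tilt (1 - α*) u · tilt α v²`. This is the product of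
`tilt (1 - α) v ≤ tilt α v` and `tilt α* u · tilt (1 - α) v ≤ tilt (1 - α*) u · tilt α v`, whose
difference is `(α - α*) (e^{u+v} - e^{-u-v}) + (α* + α - 1) (e^{v-u} - e^{u-v}) ≥ 0`.
-/

open Real

theorem integral_nonpos_of_add_comp_neg_nonpos {G : Type*} [MeasurableSpace G] [AddCommGroup G]
    [LinearOrder G] [IsOrderedAddMonoid G] [MeasurableNeg G] {μ : Measure G} [μ.IsNegInvariant]
    {f : G → ℝ} (hf : ∀ x, 0 ≤ x → f x + f (-x) ≤ 0) : ∫ x, f x ∂μ ≤ 0 := by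
  have hsymm : ∀ x, f x + f (-x) ≤ 0 := fun x ↦ by
    rcases le_total 0 x with hx | hx
    · exact hf x hx
    · simpa [add_comm] using hf (-x) (neg_nonneg.2 hx)
  by_cases hint : Integrable f μ
  · have hsum : ∫ x, (f x + f (-x)) ∂μ = 2 * ∫ x, f x ∂μ := by
      rw [integral_add hint hint.comp_neg, integral_neg_eq_self]
      ring
    linarith [integral_nonpos (μ := μ) hsymm]
  · rw [integral_undef hint]

noncomputable def tilt (α x : ℝ) : ℝ :=
  α * exp x + (1 - α) * exp (-x)

theorem tilt_neg (α x : ℝ) : tilt α (-x) = tilt (1 - α) x := by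
  simp only [tilt, neg_neg]
  ring

theorem tilt_nonneg {α : ℝ} (h0 : 0 ≤ α) (h1 : α ≤ 1) (x : ℝ) : 0 ≤ tilt α x :=
  add_nonneg (mul_nonneg h0 (exp_pos x).le) (mul_nonneg (sub_nonneg.2 h1) (exp_pos _).le)

theorem tilt_pos {α : ℝ} (h0 : 0 ≤ α) (h1 : α < 1) (x : ℝ) : 0 < tilt α x :=
  add_pos_of_nonneg_of_pos (mul_nonneg h0 (exp_pos x).le) (mul_pos (sub_pos.2 h1) (exp_pos _))

theorem tilt_one_sub_le {α x : ℝ} (hα : 1 / 2 ≤ α) (hx : 0 ≤ x) : tilt (1 - α) x ≤ tilt α x := by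
  have hexp : exp (-x) ≤ exp x := exp_le_exp.2 (by linarith)
  unfold tilt
  linear_combination mul_nonneg (by linarith : (0 : ℝ) ≤ 2 * α - 1) (sub_nonneg.2 hexp)

theorem tilt_mul_tilt_one_sub_le {αs α u v : ℝ} (hαs : 1 / 2 ≤ αs) (hα : αs ≤ α)
    (hu : 0 ≤ u) (huv : u ≤ v) :
    tilt αs u * tilt (1 - α) v ≤ tilt (1 - αs) u * tilt α v := by
  have hsum : exp (-u) * exp (-v) ≤ exp u * exp v := by
    rw [← exp_add, ← exp_add]
    exact exp_le_exp.2 (by linarith)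
  have hdiff : exp u * exp (-v) ≤ exp (-u) * exp v := by
    rw [← exp_add, ← exp_add]
    exact exp_le_exp.2 (by linarith)
  unfold tilt
  linear_combination (mul_nonneg (sub_nonneg.2 hα) (sub_nonneg.2 hsum)) +
    (mul_nonneg (by linarith : (0 : ℝ) ≤ αs + α - 1) (sub_nonneg.2 hdiff))

theorem tilt_mul_tilt_one_sub_sq_le {αs α u v : ℝ} (hαs : 1 / 2 ≤ αs) (hα : αs ≤ α) (hα1 : α ≤ 1)
    (hu : 0 ≤ u) (huv : u ≤ v) :
    tilt αs u * tilt (1 - α) v ^ 2 ≤ tilt (1 - αs) u * tilt α v ^ 2 := by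
  have hD : 0 ≤ tilt (1 - α) v := tilt_nonneg (by linarith) (by linarith) v
  have hBC : 0 ≤ tilt (1 - αs) u * tilt α v :=
    mul_nonneg (tilt_nonneg (by linarith) (by linarith) u) (tilt_nonneg (by linarith) hα1 v)
  calc tilt αs u * tilt (1 - α) v ^ 2 = tilt αs u * tilt (1 - α) v * tilt (1 - α) v := by ring
    _ ≤ tilt (1 - αs) u * tilt α v * tilt (1 - α) v :=
        mul_le_mul_of_nonneg_right (tilt_mul_tilt_one_sub_le hαs hα hu huv) hD
    _ ≤ tilt (1 - αs) u * tilt α v * tilt α v :=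
        mul_le_mul_of_nonneg_left (tilt_one_sub_le (hαs.trans hα) (hu.trans huv)) hBC
    _ = tilt (1 - αs) u * tilt α v ^ 2 := by ring

theorem stdGauss_neg (y : ℝ) : stdGauss (-y) = stdGauss y := by
  simp only [stdGauss, neg_sq]

theorem mixDen_eq_mul_tilt (θs αs y : ℝ) :
    mixDen θs αs y = stdGauss y * exp (-θs ^ 2 / 2) * tilt αs (θs * y) := by
  have hshift : ∀ c, stdGauss (y + c) = stdGauss y * exp (-c ^ 2 / 2) * exp (-(c * y)) := by
    intro c
    simp only [stdGauss, mul_assoc, ← exp_add]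
    ring_nf
  rw [mixDen, sub_eq_add_neg, hshift, hshift, tilt]
  ring_nf

theorem Gtheta_integrand_add_neg_nonpos {θs αs θ α y : ℝ} (hθs : 0 ≤ θs) (hαs : 1 / 2 ≤ αs)
    (hθ : θs ≤ θ) (hα : αs ≤ α) (hα1 : α < 1) (hy : 0 ≤ y) :
    y / tilt α (θ * y) ^ 2 * mixDen θs αs y +
      -y / tilt α (θ * -y) ^ 2 * mixDen θs αs (-y) ≤ 0 := by
  have hα0 : 0 ≤ α := by linarith
  have hfrac : tilt αs (θs * y) / tilt α (θ * y) ^ 2 ≤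
      tilt (1 - αs) (θs * y) / tilt (1 - α) (θ * y) ^ 2 := by
    have hpos : 0 < tilt (1 - α) (θ * y) := tilt_neg α (θ * y) ▸ tilt_pos hα0 hα1 _
    rw [div_le_div_iff₀ (pow_pos (tilt_pos hα0 hα1 _) 2) (pow_pos hpos 2)]
    exact tilt_mul_tilt_one_sub_sq_le hαs hα hα1.le (mul_nonneg hθs hy)
      (mul_le_mul_of_nonneg_right hθ hy)
  have hw : 0 ≤ y * (stdGauss y * exp (-θs ^ 2 / 2)) := by
    unfold stdGauss
    positivity
  rw [mixDen_eq_mul_tilt, mixDen_eq_mul_tilt, stdGauss_neg, mul_neg, mul_neg, tilt_neg, tilt_neg]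
  calc _ = -(y * (stdGauss y * exp (-θs ^ 2 / 2)) *
        (tilt (1 - αs) (θs * y) / tilt (1 - α) (θ * y) ^ 2 -
          tilt αs (θs * y) / tilt α (θ * y) ^ 2)) := by ring
    _ ≤ 0 := neg_nonpos.2 (mul_nonneg hw (sub_nonneg.2 hfrac))

theorem Gtheta_nonpos_beyond_truth_general
    (θs αs : ℝ) (hθs : 0 < θs) (hαs : 1 / 2 < αs)
    (θ : ℝ) (hθ : θs ≤ θ) (α : ℝ) (hα : αs ≤ α) (hα1 : α < 1) :
    Gtheta θs αs θ α ≤ 0 :=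
  integral_nonpos_of_add_comp_neg_nonpos fun y hy ↦
    Gtheta_integrand_add_neg_nonpos (y := y) hθs.le hαs.le hθ hα hα1 hy

/-- sign of `G_θ` beyond the truth: if `θ ≥ θ*` and `α ∈ [α*, 1)`,
then `G_θ(θ, α) ≤ 0`. -/
theorem Gtheta_nonpos_beyond_truth
    (θs αs : ℝ) (hθs : 0 < θs) (hαs : 1 / 2 < αs) (hαs1 : αs < 1)
    (θ : ℝ) (hθ : θs ≤ θ) (α : ℝ) (hα : αs ≤ α) (hα1 : α < 1) :
    Gtheta θs αs θ α ≤ 0 :=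
  Gtheta_nonpos_beyond_truth_general θs αs hθs hαs θ hθ α hα hα1
end

section
/- The tilted weight always exceeds one half: if α* > 1/2 then for every θ ∈ ℝ, G(θ, 1/2) < α*; consequently, since G(θ, ·) is strictly increasing in α, any a ∈ (0,1] with G(θ, a) = α* satisfies a > 1/2. -/
/-! At `α = 1/2` the weight `w(y) = e^{θy} / (e^{θy} + e^{-θy})` satisfies `w(-y) = 1 - w(y)`,
so the reflection `y ↦ -y` exchanges the two mixture components. Writing
`A = ∫ w(y) φ(y - θ*) dy`, this gives
`G(θ, 1/2) = α* A + (1 - α*)(1 - A) = α* - (2α* - 1)(1 - A)`, and `A < 1` because `w < 1`.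
The second claim follows because `G(θ, ·)` is monotone on `[0, 1]`: the integrand is monotone
in `α` and the mixture density is nonnegative. -/

open MeasureTheory

open ProbabilityTheory Real
open scoped NNReal

lemma stdGauss_sub (y m : ℝ) : stdGauss (y - m) = gaussianPDFReal m 1 y := by
  simp [stdGauss, gaussianPDFReal]

lemma mixDen_eq (θs αs y : ℝ) :
    mixDen θs αs y = αs * gaussianPDFReal θs 1 y + (1 - αs) * gaussianPDFReal (-θs) 1 y := by
  rw [mixDen, stdGauss_sub, ← sub_neg_eq_add y, stdGauss_sub]

lemma integrable_mixDen (θs αs : ℝ) : Integrable (mixDen θs αs) := by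
  simp_rw [funext (mixDen_eq θs αs)]
  exact ((integrable_gaussianPDFReal _ _).const_mul _).add
    ((integrable_gaussianPDFReal _ _).const_mul _)

lemma mixDen_nonneg (θs : ℝ) {αs : ℝ} (hαs0 : 0 ≤ αs) (hαs1 : αs ≤ 1) (y : ℝ) :
    0 ≤ mixDen θs αs y := by
  rw [mixDen_eq]
  have := gaussianPDFReal_nonneg θs 1 y
  have := gaussianPDFReal_nonneg (-θs) 1 y
  have : 0 ≤ 1 - αs := sub_nonneg.2 hαs1
  positivity

lemma gaussianPDFReal_neg_neg (m : ℝ) (v : ℝ≥0) (x : ℝ) :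
    gaussianPDFReal (-m) v (-x) = gaussianPDFReal m v x := by
  simp only [gaussianPDFReal]
  ring_nf

section Symmetric

variable {w : ℝ → ℝ}

lemma integrable_mul_gaussianPDFReal (hmeas : AEStronglyMeasurable w)
    (hsymm : ∀ y, w (-y) = 1 - w y) (hlt : ∀ y, w y < 1) (m : ℝ) (v : ℝ≥0) :
    Integrable (fun y ↦ w y * gaussianPDFReal m v y) :=
  (integrable_gaussianPDFReal m v).bdd_mul (c := 1) hmeas <| .of_forall fun y ↦ by
    have := hlt (-y)
    rw [Real.norm_eq_abs, abs_le]
    constructor <;> linarith [hsymm y, hlt y]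

variable {m : ℝ} {v : ℝ≥0}

theorem integral_one_sub_mul_gaussianPDFReal (hmeas : AEStronglyMeasurable w)
    (hsymm : ∀ y, w (-y) = 1 - w y) (hlt : ∀ y, w y < 1) (hv : v ≠ 0) :
    ∫ y, (1 - w y) * gaussianPDFReal m v y = 1 - ∫ y, w y * gaussianPDFReal m v y := by
  simp_rw [sub_mul, one_mul]
  rw [integral_sub (integrable_gaussianPDFReal m v)
    (integrable_mul_gaussianPDFReal hmeas hsymm hlt m v), integral_gaussianPDFReal_eq_one m hv]

theorem integral_mul_gaussianPDFReal_neg (hmeas : AEStronglyMeasurable w)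
    (hsymm : ∀ y, w (-y) = 1 - w y) (hlt : ∀ y, w y < 1) (hv : v ≠ 0) :
    ∫ y, w y * gaussianPDFReal (-m) v y = 1 - ∫ y, w y * gaussianPDFReal m v y := by
  rw [← integral_neg_eq_self, ← integral_one_sub_mul_gaussianPDFReal hmeas hsymm hlt hv]
  simp_rw [hsymm, gaussianPDFReal_neg_neg]

theorem integral_mul_gaussianPDFReal_lt_one (hmeas : AEStronglyMeasurable w)
    (hsymm : ∀ y, w (-y) = 1 - w y) (hlt : ∀ y, w y < 1) (hv : v ≠ 0) :
    ∫ y, w y * gaussianPDFReal m v y < 1 := by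
  have hpos : ∀ y, 0 < (1 - w y) * gaussianPDFReal m v y := fun y ↦
    mul_pos (sub_pos.2 (hlt y)) (gaussianPDFReal_pos m v y hv)
  have hint : Integrable (fun y ↦ (1 - w y) * gaussianPDFReal m v y) := by
    simp_rw [sub_mul, one_mul]
    exact (integrable_gaussianPDFReal m v).sub (integrable_mul_gaussianPDFReal hmeas hsymm hlt m v)
  have := (integral_pos_iff_support_of_nonneg (fun y ↦ (hpos y).le) hint).2 <| by
    rw [Function.support_eq_univ fun y ↦ (hpos y).ne']
    exact Measure.measure_univ_pos.2 (NeZero.ne volume)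
  linarith [integral_one_sub_mul_gaussianPDFReal hmeas hsymm hlt (m := m) hv]

theorem integral_mul_gaussian_mixture_lt (hmeas : AEStronglyMeasurable w)
    (hsymm : ∀ y, w (-y) = 1 - w y) (hlt : ∀ y, w y < 1) (hv : v ≠ 0) {α : ℝ}
    (hα : 1 / 2 < α) :
    ∫ y, w y * (α * gaussianPDFReal m v y + (1 - α) * gaussianPDFReal (-m) v y) < α := by
  simp_rw [mul_add, mul_left_comm (w _)]
  rw [integral_add ((integrable_mul_gaussianPDFReal hmeas hsymm hlt m v).const_mul α)
    ((integrable_mul_gaussianPDFReal hmeas hsymm hlt (-m) v).const_mul _), integral_const_mul,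
    integral_const_mul, integral_mul_gaussianPDFReal_neg hmeas hsymm hlt hv]
  nlinarith [integral_mul_gaussianPDFReal_lt_one hmeas hsymm hlt (m := m) hv]

end Symmetric

noncomputable def tiltWeight (α θ y : ℝ) : ℝ :=
  α * exp (θ * y) / (α * exp (θ * y) + (1 - α) * exp (-(θ * y)))

lemma Gmap_eq_integral_tiltWeight (θs αs θ α : ℝ) :
    Gmap θs αs θ α = ∫ y, tiltWeight α θ y * mixDen θs αs y := rfl

section TiltWeight

variable {a b : ℝ}

lemma tiltWeight_denom_pos (ha0 : 0 ≤ a) (ha1 : a ≤ 1) (u : ℝ) :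
    0 < a * exp u + (1 - a) * exp (-u) := by
  rcases ha0.lt_or_eq with ha0 | rfl
  · have : 0 ≤ (1 - a) * exp (-u) := mul_nonneg (sub_nonneg.2 ha1) (exp_pos _).le
    positivity
  · simpa using exp_pos (-u)

lemma measurable_tiltWeight (a θ : ℝ) : Measurable (tiltWeight a θ) := by
  unfold tiltWeight
  fun_prop

lemma abs_tiltWeight_le_one (ha0 : 0 ≤ a) (ha1 : a ≤ 1) (θ y : ℝ) :
    |tiltWeight a θ y| ≤ 1 := by
  have hd := tiltWeight_denom_pos ha0 ha1 (θ * y)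
  have : 0 ≤ (1 - a) * exp (-(θ * y)) := mul_nonneg (sub_nonneg.2 ha1) (exp_pos _).le
  rw [tiltWeight, abs_div, abs_of_nonneg (by positivity), abs_of_pos hd, div_le_one hd]
  linarith

lemma tiltWeight_lt_one (ha0 : 0 ≤ a) (ha1 : a < 1) (θ y : ℝ) : tiltWeight a θ y < 1 := by
  have hd := tiltWeight_denom_pos ha0 ha1.le (θ * y)
  rw [tiltWeight, div_lt_one hd]
  have : 0 < (1 - a) * exp (-(θ * y)) := mul_pos (sub_pos.2 ha1) (exp_pos _)
  linarith

lemma tiltWeight_neg (ha0 : 0 ≤ a) (ha1 : a ≤ 1) (θ y : ℝ) :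
    tiltWeight a θ (-y) = 1 - tiltWeight (1 - a) θ y := by
  have hd := tiltWeight_denom_pos ha0 ha1 (-(θ * y))
  rw [neg_neg] at hd
  rw [tiltWeight, tiltWeight, mul_neg, neg_neg, sub_sub_cancel, eq_sub_iff_add_eq,
    add_comm ((1 - a) * _), ← add_div, div_self hd.ne']

lemma tiltWeight_mono (ha0 : 0 ≤ a) (hab : a ≤ b) (hb1 : b ≤ 1) (θ y : ℝ) :
    tiltWeight a θ y ≤ tiltWeight b θ y := by
  have hexp : exp (θ * y) * exp (-(θ * y)) = 1 := by rw [← exp_add, add_neg_cancel, exp_zero]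
  rw [tiltWeight, tiltWeight, div_le_div_iff₀ (tiltWeight_denom_pos ha0 (hab.trans hb1) _)
    (tiltWeight_denom_pos (ha0.trans hab) hb1 _)]
  nlinarith [exp_pos (θ * y)]

lemma integrable_tiltWeight_mul_mixDen (ha0 : 0 ≤ a) (ha1 : a ≤ 1) (θs αs θ : ℝ) :
    Integrable (fun y ↦ tiltWeight a θ y * mixDen θs αs y) :=
  (integrable_mixDen θs αs).bdd_mul (measurable_tiltWeight a θ).aestronglyMeasurable
    (.of_forall fun y ↦ (Real.norm_eq_abs _).trans_le (abs_tiltWeight_le_one ha0 ha1 θ y))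

end TiltWeight

lemma Gmap_monotoneOn (θs : ℝ) {αs : ℝ} (hαs0 : 0 ≤ αs) (hαs1 : αs ≤ 1) (θ : ℝ) :
    MonotoneOn (Gmap θs αs θ) (Set.Icc 0 1) := by
  rintro a ⟨ha0, ha1⟩ b ⟨hb0, hb1⟩ hab
  exact integral_mono (integrable_tiltWeight_mul_mixDen ha0 ha1 θs αs θ)
    (integrable_tiltWeight_mul_mixDen hb0 hb1 θs αs θ) fun y ↦
      mul_le_mul_of_nonneg_right (tiltWeight_mono ha0 hab hb1 θ y)
        (mixDen_nonneg θs hαs0 hαs1 y)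

lemma Gmap_half_lt (θs : ℝ) {αs : ℝ} (hαs : 1 / 2 < αs) (θ : ℝ) :
    Gmap θs αs θ (1 / 2) < αs := by
  simp_rw [Gmap_eq_integral_tiltWeight, mixDen_eq]
  refine integral_mul_gaussian_mixture_lt (measurable_tiltWeight _ θ).aestronglyMeasurable
    (fun y ↦ ?_) (tiltWeight_lt_one (by norm_num) (by norm_num) θ) one_ne_zero hαs
  rw [tiltWeight_neg (by norm_num) (by norm_num)]
  norm_num

theorem tilted_weight_gt_half_general
    (θs αs : ℝ) (hαs : 1 / 2 < αs) (hαs1 : αs < 1) :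
    (∀ θ : ℝ, Gmap θs αs θ (1 / 2) < αs) ∧
    (∀ θ a : ℝ, 0 < a → a ≤ 1 → Gmap θs αs θ a = αs → 1 / 2 < a) := by
  refine ⟨Gmap_half_lt θs hαs, fun θ a ha ha1 hGa ↦ ?_⟩
  by_contra! ha_le
  have hGa_le := Gmap_monotoneOn θs (by linarith) hαs1.le θ ⟨ha.le, ha1⟩
    ⟨by norm_num, by norm_num⟩ ha_le
  linarith [Gmap_half_lt θs hαs θ]

/-- the tilted weight always exceeds one half: for every `θ`,
`G(θ, 1/2) < α*`; consequently any `a ∈ (0, 1]` with `G(θ, a) = α*` satisfies `a > 1/2`. -/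
theorem tilted_weight_gt_half
    (θs αs : ℝ) (hθs : 0 < θs) (hαs : 1 / 2 < αs) (hαs1 : αs < 1) :
    (∀ θ : ℝ, Gmap θs αs θ (1 / 2) < αs) ∧
    (∀ θ a : ℝ, 0 < a → a ≤ 1 → Gmap θs αs θ a = αs → 1 / 2 < a) :=
  tilted_weight_gt_half_general θs αs hαs hαs1
end
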